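/- Let G be a finite directed multigraph with no intersecting cycles that contains at least one simple cycle, let P = Path_G(∞) be its space of infinite paths, topologized as a subspace of the product space E^ℕ with E discrete, and let D be the largest k ∈ ℕ for which there exist pairwise vertex-disjoint simple cycles C₀, C₁, …, C_k with C₀ ≥ C₁ ≥ ⋯ ≥ C_k. Then the iterated derived sets of P satisfy P⁽ᴰ⁾ ≠ ∅ and P⁽ᴰ⁺¹⁾ = ∅; in particular the Cantor–Bendixson rank of P, the least n with P⁽ⁿ⁾ = ∅, equals D + 1. -/

import Mathlib

open Filter Topology

variable {V E : Type*}

/-- A nonempty list of edges forms a directed path: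
the target of each edge is the source of the next. -/
def IsDiPath (src tgt : E → V) (l : List E) : Prop :=
  l ≠ [] ∧ l.Chain' (fun e f => tgt e = src f)

/-- The path `l` starts at the vertex `v` (the source of its first edge is `v`). -/
def StartsAt (src : E → V) (l : List E) (v : V) : Prop :=
  l.head?.map src = some v

/-- The path `l` ends at the vertex `w` (the target of its last edge is `w`). -/
def EndsAt (tgt : E → V) (l : List E) (w : V) : Prop :=
  l.getLast?.map tgt = some w

/-- `l` is a closed path: a path such that the target of the last edge
equals the source of the first edge. -/
def IsClosedDiPath (src tgt : E → V) (l : List E) : Prop :=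
  IsDiPath src tgt l ∧ ∃ v : V, StartsAt src l v ∧ EndsAt tgt l v

/-- `l` is a simple cycle: a closed path whose edge sources are pairwise distinct. -/
def IsSimpleCycle (src tgt : E → V) (l : List E) : Prop :=
  IsClosedDiPath src tgt l ∧ (l.map src).Nodup

/-- The vertex `v` lies on the cycle `l`, i.e. it is the source of one of its edges. -/
def OnCycle (src : E → V) (l : List E) (v : V) : Prop :=
  v ∈ l.map src

/-- Two simple cycles are distinct if neither is a cyclic rotation of the other;
the graph has no intersecting cycles if any two distinct simple cycles are
vertex-disjoint. -/
def NoIntersectingCycles (src tgt : E → V) : Prop :=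
  ∀ l l' : List E, IsSimpleCycle src tgt l → IsSimpleCycle src tgt l' →
    ¬ l.IsRotated l' → ∀ v : V, ¬ (OnCycle src l v ∧ OnCycle src l' v)

/-- `v ≥ w`: either `v = w` or there is a directed path from `v` to `w`. -/
def Reaches (src tgt : E → V) (v w : V) : Prop :=
  v = w ∨ ∃ l : List E, IsDiPath src tgt l ∧ StartsAt src l v ∧ EndsAt tgt l w

/-- `v` and `w` are mutually reachable. -/
def MutReach (src tgt : E → V) (v w : V) : Prop :=
  Reaches src tgt v w ∧ Reaches src tgt w v

/-- The number of directed paths of length `n` in the graph starting at `v`. -/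
noncomputable def pathCount (src tgt : E → V) (v : V) (n : ℕ) : ℕ :=
  Nat.card {l : List E // l.length = n ∧ IsDiPath src tgt l ∧ StartsAt src l v}

/-- An infinite path in the graph. -/
def IsInfPath (src tgt : E → V) (p : ℕ → E) : Prop :=
  ∀ n : ℕ, tgt (p n) = src (p (n + 1))

/-- The vertex `v` is visited infinitely often by the infinite path `p`. -/
def VisitedInfOften (src : E → V) (p : ℕ → E) (v : V) : Prop :=
  ∀ N : ℕ, ∃ n ≥ N, src (p n) = v

/-- `v ≥ C`: the vertex `v` reaches some vertex on the cycle `C`. -/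
def ReachesCycle (src tgt : E → V) (v : V) (l : List E) : Prop :=
  ∃ w : V, OnCycle src l w ∧ Reaches src tgt v w

/-- `C ≥ C'`: some vertex on the cycle `C` reaches the cycle `C'`. -/
def CycleReachesCycle (src tgt : E → V) (l l' : List E) : Prop :=
  ∃ v : V, OnCycle src l v ∧ ReachesCycle src tgt v l'

/-- Two cycles are vertex-disjoint. -/
def CyclesDisjoint (src : E → V) (l l' : List E) : Prop :=
  ∀ v : V, ¬ (OnCycle src l v ∧ OnCycle src l' v)

/-- The vertex `v` lies on two distinct simple cycles. -/
def OnTwoCycles (src tgt : E → V) (v : V) : Prop :=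
  ∃ l l' : List E, IsSimpleCycle src tgt l ∧ IsSimpleCycle src tgt l' ∧
    ¬ l.IsRotated l' ∧ OnCycle src l v ∧ OnCycle src l' v

/-- The adjacency matrix of the graph, as a real matrix: the `(a, b)` entry is the
number of edges from `a` to `b`. -/
noncomputable def adjMatrix (src tgt : E → V) : Matrix V V ℝ :=
  Matrix.of fun a b => (Nat.card {e : E // src e = a ∧ tgt e = b} : ℝ)

/-!
An infinite path eventually winds around a single simple cycle, its terminal cycle: some vertex
recurs, and a path on a cycle `C` can never leave it, because an edge that leaves `C` and later
returns would close up to a second simple cycle through a vertex of `C`. By induction on `k`,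
`P⁽ᵏ⁾` consists of the paths whose terminal cycle `C₀` starts a chain `C₀ ≥ C₁ ≥ ⋯ ≥ C_k` of
pairwise disjoint simple cycles. If the chain has length `k + 1`, the path is a limit of paths
that follow it for a long time, then descend from `C₀` to `C₁` and wind around `C₁`. Conversely,
a path of `P⁽ᵏ⁾` that agrees with `p` for a long time but differs from it has to leave the
terminal cycle `C` of `p`, so its own terminal cycle lies below `C` and is disjoint from it; it is
then disjoint from the rest of its chain too, since two disjoint cycles never reach each other
mutually.
-/

inductive IsWalk (src tgt : E → V) : V → V → List E → Prop
  | nil (v : V) : IsWalk src tgt v v []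
  | cons {e : E} {w : V} {l : List E} :
      IsWalk src tgt (tgt e) w l → IsWalk src tgt (src e) w (e :: l)

section

variable {src tgt : E → V}

@[simp] lemma isWalk_nil_iff {u w : V} : IsWalk src tgt u w [] ↔ u = w := by
  constructor
  · rintro ⟨⟩; rfl
  · rintro rfl; exact .nil u

@[simp] lemma isWalk_cons_iff {u w : V} {e : E} {l : List E} :
    IsWalk src tgt u w (e :: l) ↔ src e = u ∧ IsWalk src tgt (tgt e) w l := by
  constructor
  · rintro ⟨⟩; exact ⟨rfl, by assumption⟩
  · rintro ⟨rfl, h⟩; exact h.cons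

lemma IsWalk.append {u v w : V} {l m : List E} (hl : IsWalk src tgt u v l)
    (hm : IsWalk src tgt v w m) : IsWalk src tgt u w (l ++ m) := by
  induction hl with
  | nil => exact hm
  | cons _ ih => exact (ih hm).cons

lemma IsWalk.of_append {u w : V} {l m : List E} (h : IsWalk src tgt u w (l ++ m)) :
    ∃ v, IsWalk src tgt u v l ∧ IsWalk src tgt v w m := by
  induction l generalizing u with
  | nil => exact ⟨u, .nil u, h⟩
  | cons e l ih =>
    rw [List.cons_append, isWalk_cons_iff] at h
    obtain ⟨v, hl, hm⟩ := ih h.2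
    obtain rfl := h.1
    exact ⟨v, hl.cons, hm⟩

lemma isDiPath_cons_cons_iff {e f : E} {l : List E} :
    IsDiPath src tgt (e :: f :: l) ↔ tgt e = src f ∧ IsDiPath src tgt (f :: l) := by
  show (_ ∧ List.IsChain _ _) ↔ _ ∧ (_ ∧ List.IsChain _ _)
  simp [List.isChain_cons_cons]

lemma isDiPath_startsAt_endsAt_iff {l : List E} {u w : V} :
    (IsDiPath src tgt l ∧ StartsAt src l u ∧ EndsAt tgt l w) ↔
      l ≠ [] ∧ IsWalk src tgt u w l := by
  induction l generalizing u with
  | nil => simp [IsDiPath]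
  | cons e l ih =>
    cases l with
    | nil =>
      have : IsDiPath src tgt [e] := ⟨List.cons_ne_nil _ _, List.isChain_singleton e⟩
      simp [this, StartsAt, EndsAt, eq_comm]
    | cons f l =>
      have := @ih (tgt e)
      simp only [isDiPath_cons_cons_iff, StartsAt, EndsAt, List.head?_cons, Option.map_some,
        Option.some.injEq, List.getLast?_cons_cons, ne_eq, reduceCtorEq, not_false_eq_true,
        true_and, isWalk_cons_iff] at this ⊢
      rw [← this]
      tauto

lemma reaches_iff_exists_isWalk {v w : V} :
    Reaches src tgt v w ↔ ∃ l, IsWalk src tgt v w l := by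
  rw [Reaches]
  constructor
  · rintro (rfl | ⟨l, h⟩)
    · exact ⟨[], .nil v⟩
    · exact ⟨l, (isDiPath_startsAt_endsAt_iff.mp h).2⟩
  · rintro ⟨l, hl⟩
    rcases l with _ | ⟨e, l⟩
    · exact Or.inl (isWalk_nil_iff.mp hl)
    · exact Or.inr ⟨_, isDiPath_startsAt_endsAt_iff.mpr ⟨List.cons_ne_nil _ _, hl⟩⟩

lemma isSimpleCycle_iff {C : List E} :
    IsSimpleCycle src tgt C ↔ C ≠ [] ∧ (∃ v, IsWalk src tgt v v C) ∧ (C.map src).Nodup := by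
  simp only [IsSimpleCycle, IsClosedDiPath]
  constructor
  · rintro ⟨⟨hp, v, hs, he⟩, hnd⟩
    exact ⟨hp.1, ⟨v, (isDiPath_startsAt_endsAt_iff.mp ⟨hp, hs, he⟩).2⟩, hnd⟩
  · rintro ⟨hne, ⟨v, hv⟩, hnd⟩
    obtain ⟨hp, hs, he⟩ := isDiPath_startsAt_endsAt_iff.mpr ⟨hne, hv⟩
    exact ⟨⟨hp, v, hs, he⟩, hnd⟩

lemma isInfPath_cons {e : E} {p : ℕ → E} :
    IsInfPath src tgt (Stream'.cons e p) ↔ tgt e = src (p 0) ∧ IsInfPath src tgt p :=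
  ⟨fun h => ⟨h 0, fun n => h (n + 1)⟩, fun h n => n.casesOn h.1 h.2⟩

lemma IsWalk.isInfPath_append {u : V} {l : List E} {p : ℕ → E}
    (hl : IsWalk src tgt u (src (p 0)) l) (hp : IsInfPath src tgt p) :
    IsInfPath src tgt (l ++ₛ p) ∧ src ((l ++ₛ p) 0) = u := by
  generalize hw : src (p 0) = w at hl
  induction hl with
  | nil => exact ⟨hp, hw⟩
  | cons _ ih =>
    obtain ⟨ih, ih0⟩ := ih hw
    exact ⟨isInfPath_cons.mpr ⟨ih0.symm, ih⟩, rfl⟩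

lemma IsInfPath.splice {p r : ℕ → E} (hp : IsInfPath src tgt p) (hr : IsInfPath src tgt r)
    {M : ℕ} (h : src (r 0) = src (p M)) :
    IsInfPath src tgt (fun n => if n < M then p n else r (n - M)) := by
  intro n
  rcases lt_trichotomy (n + 1) M with hn | hn | hn
  · simp [hn, show n < M by omega, hp n]
  · subst hn
    simp [h, hp n]
  · simp [show ¬ n < M by omega, show ¬ n + 1 < M by omega,
      show n + 1 - M = n - M + 1 by omega, hr (n - M)]

lemma IsInfPath.exists_isWalk {p : ℕ → E} (hp : IsInfPath src tgt p) {a b : ℕ} (hab : a ≤ b) :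
    ∃ l, IsWalk src tgt (src (p a)) (src (p b)) l ∧ ∀ k, a ≤ k → k < b → p k ∈ l := by
  induction b, hab using Nat.le_induction with
  | base => exact ⟨[], .nil _, fun k hk hk' => absurd hk' (by omega)⟩
  | succ b _ ih =>
    obtain ⟨l, hl, hmem⟩ := ih
    refine ⟨l ++ [p b], hl.append (by simp [hp b]), fun k hak hkb => ?_⟩
    rcases Nat.lt_succ_iff_lt_or_eq.mp hkb with hk | rfl
    · exact List.mem_append_left _ (hmem k hak hk)
    · simp

lemma IsWalk.exists_isWalk_of_mem_map {v x y : V} {C : List E} (hC : IsWalk src tgt v v C)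
    (hx : x ∈ C.map src) (hy : y ∈ C.map src) :
    ∃ l, IsWalk src tgt x y l ∧ ∀ e ∈ l, e ∈ C := by
  obtain ⟨f, hf, rfl⟩ := List.mem_map.mp hx
  obtain ⟨g, hg, rfl⟩ := List.mem_map.mp hy
  obtain ⟨A, B, rfl⟩ := List.append_of_mem hf
  obtain ⟨A', B', hAB'⟩ := List.append_of_mem hg
  obtain ⟨_, -, hB⟩ := hC.of_append
  obtain ⟨_, hA', hB'⟩ := (hAB' ▸ hC).of_append
  obtain rfl := (isWalk_cons_iff.mp hB).1
  obtain rfl := (isWalk_cons_iff.mp hB').1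
  refine ⟨(f :: B) ++ A', hB.append hA', fun e he => ?_⟩
  rcases List.mem_append.mp he with he | he
  · exact List.mem_append_right A he
  · exact hAB' ▸ List.mem_append_left _ he

lemma IsWalk.tgt_mem_map {v : V} {C : List E} (hC : IsWalk src tgt v v C) {e : E}
    (he : e ∈ C) : tgt e ∈ C.map src := by
  obtain ⟨A, B, rfl⟩ := List.append_of_mem he
  obtain ⟨_, -, hB⟩ := hC.of_append
  obtain ⟨rfl, hB'⟩ := isWalk_cons_iff.mp hB
  rcases B with _ | ⟨g, B⟩
  · obtain rfl := isWalk_nil_iff.mp hB'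
    rcases A with _ | ⟨a, A⟩
    · simpa [eq_comm] using hC
    · simp [(isWalk_cons_iff.mp hC).1]
  · simp [(isWalk_cons_iff.mp hB').1]

lemma IsSimpleCycle.exists_isWalk {C : List E} (hC : IsSimpleCycle src tgt C) {x y : V}
    (hx : OnCycle src C x) (hy : OnCycle src C y) :
    ∃ l, IsWalk src tgt x y l ∧ ∀ e ∈ l, e ∈ C := by
  obtain ⟨-, ⟨v, hv⟩, -⟩ := isSimpleCycle_iff.mp hC
  exact hv.exists_isWalk_of_mem_map hx hy

lemma IsSimpleCycle.reaches {C : List E} (hC : IsSimpleCycle src tgt C) {x y : V}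
    (hx : OnCycle src C x) (hy : OnCycle src C y) : Reaches src tgt x y :=
  reaches_iff_exists_isWalk.mpr ((hC.exists_isWalk hx hy).imp fun _ h => h.1)

lemma IsSimpleCycle.onCycle_tgt {C : List E} (hC : IsSimpleCycle src tgt C) {e : E}
    (he : e ∈ C) : OnCycle src C (tgt e) := by
  obtain ⟨-, ⟨v, hv⟩, -⟩ := isSimpleCycle_iff.mp hC
  exact hv.tgt_mem_map he

lemma IsSimpleCycle.eq_of_src_eq {C : List E} (hC : IsSimpleCycle src tgt C) {e f : E}
    (he : e ∈ C) (hf : f ∈ C) (h : src e = src f) : e = f :=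
  List.inj_on_of_nodup_map hC.2 he hf h

lemma IsWalk.exists_nodup_map_src {u w : V} {l : List E} (h : IsWalk src tgt u w l) :
    ∃ l', IsWalk src tgt u w l' ∧ (l'.map src).Nodup ∧ w ∉ l'.map src := by
  induction h with
  | nil v => exact ⟨[], .nil v, by simp⟩
  | @cons e w l _ ih =>
    obtain ⟨l', hl', hnd, hw⟩ := ih
    by_cases hew : src e = w
    · exact ⟨[], hew ▸ .nil _, by simp⟩
    by_cases hmem : src e ∈ l'.map src
    · obtain ⟨g, hg, hge⟩ := List.mem_map.mp hmem
      obtain ⟨A, B, rfl⟩ := List.append_of_mem hg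
      obtain ⟨_, -, hB⟩ := hl'.of_append
      obtain rfl := (isWalk_cons_iff.mp hB).1
      refine ⟨g :: B, hge ▸ hB, hnd.sublist (by simp), ?_⟩
      simp_all
    · exact ⟨e :: l', hl'.cons, by simp_all, by simp_all [eq_comm]⟩

lemma exists_isSimpleCycle_mem_of_isWalk {e : E} {l : List E}
    (h : IsWalk src tgt (tgt e) (src e) l) : ∃ Z, IsSimpleCycle src tgt Z ∧ e ∈ Z := by
  obtain ⟨l', hl', hnd, hw⟩ := h.exists_nodup_map_src
  refine ⟨e :: l', isSimpleCycle_iff.mpr ⟨by simp, ⟨src e, hl'.cons⟩, ?_⟩, by simp⟩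
  simp [hnd, hw]

lemma Reaches.trans {u v w : V} (h₁ : Reaches src tgt u v) (h₂ : Reaches src tgt v w) :
    Reaches src tgt u w := by
  obtain ⟨l, hl⟩ := reaches_iff_exists_isWalk.mp h₁
  obtain ⟨m, hm⟩ := reaches_iff_exists_isWalk.mp h₂
  exact reaches_iff_exists_isWalk.mpr ⟨l ++ m, hl.append hm⟩

lemma IsSimpleCycle.exists_onCycle {C : List E} (hC : IsSimpleCycle src tgt C) :
    ∃ v, OnCycle src C v := by
  obtain ⟨e, l, rfl⟩ := List.exists_cons_of_ne_nil (isSimpleCycle_iff.mp hC).1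
  exact ⟨src e, by simp [OnCycle]⟩

lemma IsSimpleCycle.cycleReachesCycle_self {C : List E} (hC : IsSimpleCycle src tgt C) :
    CycleReachesCycle src tgt C C :=
  let ⟨v, hv⟩ := hC.exists_onCycle
  ⟨v, hv, v, hv, Or.inl rfl⟩

lemma CycleReachesCycle.trans {A B C : List E} (hB : IsSimpleCycle src tgt B)
    (h₁ : CycleReachesCycle src tgt A B) (h₂ : CycleReachesCycle src tgt B C) :
    CycleReachesCycle src tgt A C := by
  obtain ⟨a, ha, b, hb, hab⟩ := h₁
  obtain ⟨b', hb', c, hc, hbc⟩ := h₂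
  exact ⟨a, ha, c, hc, hab.trans ((hB.reaches hb hb').trans hbc)⟩

theorem IsSimpleCycle.mem_of_isWalk (hG : NoIntersectingCycles src tgt) {C : List E}
    (hC : IsSimpleCycle src tgt C) {x y : V} {l : List E} (hl : IsWalk src tgt x y l)
    (hx : OnCycle src C x) (hy : OnCycle src C y) : ∀ e ∈ l, e ∈ C := by
  induction hl with
  | nil => simp
  | @cons e w l hl ih =>
    have he : e ∈ C := by
      -- otherwise `e`, followed by the walk and a way back inside `C`, closes up to a simple
      -- cycle through `src e` that is not a rotation of `C`
      by_contra he
      obtain ⟨m, hm, -⟩ := hC.exists_isWalk hy hx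
      obtain ⟨Z, hZ, heZ⟩ := exists_isSimpleCycle_mem_of_isWalk (hl.append hm)
      exact hG Z C hZ hC (fun hrot => he (hrot.mem_iff.mp heZ)) (src e)
        ⟨List.mem_map_of_mem heZ, hx⟩
    intro f hf
    rcases List.mem_cons.mp hf with rfl | hf
    · exact he
    · exact ih (hC.onCycle_tgt he) hy f hf

lemma not_cycleReachesCycle_of_cyclesDisjoint (hG : NoIntersectingCycles src tgt)
    {C C' : List E} (hC : IsSimpleCycle src tgt C) (hC' : IsSimpleCycle src tgt C')
    (hdisj : CyclesDisjoint src C C') (h : CycleReachesCycle src tgt C C') :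
    ¬ CycleReachesCycle src tgt C' C := by
  obtain ⟨a, ha, b, hb, hab⟩ := h
  rintro ⟨b', hb', a', ha', hba⟩
  obtain ⟨l₁, hl₁⟩ := reaches_iff_exists_isWalk.mp hab
  obtain ⟨l₂, hl₂⟩ := reaches_iff_exists_isWalk.mp ((hC'.reaches hb hb').trans hba)
  have hsub := hC.mem_of_isWalk hG (hl₁.append hl₂) ha ha'
  refine hdisj b ⟨?_, hb⟩
  rcases l₂ with _ | ⟨f, l₂⟩
  · rwa [isWalk_nil_iff.mp hl₂]
  · rw [← (isWalk_cons_iff.mp hl₂).1]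
    exact List.mem_map_of_mem (hsub f (by simp))

theorem IsInfPath.exists_isSimpleCycle_eventually_mem [Finite V]
    (hG : NoIntersectingCycles src tgt) {p : ℕ → E} (hp : IsInfPath src tgt p) :
    ∃ C, IsSimpleCycle src tgt C ∧ ∀ᶠ n in atTop, p n ∈ C := by
  obtain ⟨v, hv⟩ := Finite.exists_infinite_fiber (fun n => src (p n))
  have hfreq : ∃ᶠ n in atTop, src (p n) = v :=
    Nat.frequently_atTop_iff_infinite.mpr (Set.infinite_coe_iff.mp hv)
  obtain ⟨n₁, hn₁⟩ := hfreq.exists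
  obtain ⟨n₂, hn₂, hn₂v⟩ := frequently_atTop.mp hfreq (n₁ + 1)
  obtain ⟨l, hl, -⟩ := hp.exists_isWalk hn₂
  rw [← hp n₁, hn₂v, ← hn₁] at hl
  obtain ⟨Z, hZ, hmem⟩ := exists_isSimpleCycle_mem_of_isWalk hl
  have hvZ : OnCycle src Z v := hn₁ ▸ List.mem_map_of_mem hmem
  refine ⟨Z, hZ, eventually_atTop.mpr ⟨n₁, fun n hn => ?_⟩⟩
  obtain ⟨m, hm, hmv⟩ := frequently_atTop.mp hfreq (n + 1)
  obtain ⟨l, hl, hnl⟩ := hp.exists_isWalk (a := n₁) (b := m) (by omega)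
  exact hZ.mem_of_isWalk hG hl (hn₁ ▸ hvZ) (hmv ▸ hvZ) _ (hnl n hn (by omega))

lemma IsSimpleCycle.cycleReachesCycle_and_cyclesDisjoint_of_not_mem
    (hG : NoIntersectingCycles src tgt) {C C' : List E} (hC : IsSimpleCycle src tgt C)
    (hC' : IsSimpleCycle src tgt C') {q : ℕ → E} (hq : IsInfPath src tgt q)
    (hqC' : ∀ᶠ n in atTop, q n ∈ C') {t : ℕ} (ht : OnCycle src C (src (q t))) (hnot : q t ∉ C) :
    CycleReachesCycle src tgt C C' ∧ CyclesDisjoint src C C' := by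
  obtain ⟨m, hmC', hm⟩ := (hqC'.and (eventually_ge_atTop (t + 1))).exists
  obtain ⟨l, hl, htl⟩ := hq.exists_isWalk (a := t) (b := m) (by omega)
  have hmC'' : OnCycle src C' (src (q m)) := List.mem_map_of_mem hmC'
  refine ⟨⟨_, ht, _, hmC'', reaches_iff_exists_isWalk.mpr ⟨l, hl⟩⟩, fun w ⟨hwC, hwC'⟩ => ?_⟩
  obtain ⟨l', hl', -⟩ := hC'.exists_isWalk hmC'' hwC'
  exact hnot (hC.mem_of_isWalk hG (hl.append hl') ht hwC _
    (List.mem_append_left _ (htl t le_rfl (by omega))))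

lemma exists_isInfPath_of_forall_exists {S : E → Prop} {W : V → Prop}
    (h : ∀ x, W x → ∃ e, S e ∧ src e = x ∧ W (tgt e)) {w : V} (hw : W w) :
    ∃ r, IsInfPath src tgt r ∧ src (r 0) = w ∧ ∀ n, S (r n) := by
  have : Nonempty E := ⟨(h w hw).choose⟩
  choose! f hfS hfsrc hftgt using h
  have hx : ∀ n, W ((tgt ∘ f)^[n] w) := fun n => by
    induction n with
    | zero => exact hw
    | succ n ih => rw [Function.iterate_succ_apply']; exact hftgt _ ih
  refine ⟨fun n => f ((tgt ∘ f)^[n] w), fun n => ?_, hfsrc w hw, fun n => hfS _ (hx n)⟩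
  rw [hfsrc _ (hx (n + 1)), Function.iterate_succ_apply']
  rfl

lemma IsSimpleCycle.exists_isInfPath {C : List E} (hC : IsSimpleCycle src tgt C) {w : V}
    (hw : OnCycle src C w) : ∃ r, IsInfPath src tgt r ∧ src (r 0) = w ∧ ∀ n, r n ∈ C :=
  exists_isInfPath_of_forall_exists (fun _ hx => by
    obtain ⟨e, he, rfl⟩ := List.mem_map.mp hx
    exact ⟨e, he, rfl, hC.onCycle_tgt he⟩) hw

lemma IsInfPath.exists_agree_of_reaches {p r : ℕ → E} (hp : IsInfPath src tgt p)
    (hr : IsInfPath src tgt r) {M : ℕ} (h : Reaches src tgt (src (p M)) (src (r 0))) :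
    ∃ q, IsInfPath src tgt q ∧ (∀ m < M, q m = p m) ∧ ∃ K, ∀ k, q (K + k) = r k := by
  obtain ⟨l, hl⟩ := reaches_iff_exists_isWalk.mp h
  obtain ⟨hr', hr'0⟩ := hl.isInfPath_append hr
  refine ⟨_, hp.splice hr' hr'0, fun m hm => if_pos hm, M + l.length, fun k => ?_⟩
  simp only [show ¬ M + l.length + k < M by omega, if_false,
    show M + l.length + k - M = l.length + k by omega]
  exact Stream'.get_append_right k l r

lemma CyclesDisjoint.symm {C C' : List E} (h : CyclesDisjoint src C C') :
    CyclesDisjoint src C' C :=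
  fun v hv => h v hv.symm

variable (src tgt) in
def IsCycleChain {k : ℕ} (Cs : Fin (k + 1) → List E) : Prop :=
  (∀ i, IsSimpleCycle src tgt (Cs i)) ∧ (∀ i j, i ≠ j → CyclesDisjoint src (Cs i) (Cs j)) ∧
    ∀ i : Fin k, CycleReachesCycle src tgt (Cs i.castSucc) (Cs i.succ)

lemma IsSimpleCycle.isCycleChain {C : List E} (hC : IsSimpleCycle src tgt C) :
    IsCycleChain src tgt (fun _ : Fin 1 => C) :=
  ⟨fun _ => hC, fun i j hij => absurd (Subsingleton.elim (α := Fin 1) i j) hij,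
    fun i => i.elim0⟩

lemma IsCycleChain.cycleReachesCycle_zero {k : ℕ} {Cs : Fin (k + 1) → List E}
    (h : IsCycleChain src tgt Cs) (j : Fin (k + 1)) :
    CycleReachesCycle src tgt (Cs 0) (Cs j) := by
  induction j using Fin.induction with
  | zero => exact (h.1 0).cycleReachesCycle_self
  | succ j ih => exact ih.trans (h.1 _) (h.2.2 j)

lemma IsCycleChain.tail {k : ℕ} {Cs : Fin (k + 2) → List E} (h : IsCycleChain src tgt Cs) :
    IsCycleChain src tgt (Fin.tail Cs) :=
  ⟨fun i => h.1 i.succ, fun i j hij => h.2.1 _ _ (Fin.succ_injective _ |>.ne hij),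
    fun i => by simpa [Fin.tail, ← Fin.succ_castSucc] using h.2.2 i.succ⟩

lemma IsCycleChain.cons (hG : NoIntersectingCycles src tgt) {k : ℕ}
    {Cs : Fin (k + 1) → List E} (h : IsCycleChain src tgt Cs) {C : List E}
    (hC : IsSimpleCycle src tgt C) (hreach : CycleReachesCycle src tgt C (Cs 0))
    (hdisj : CyclesDisjoint src C (Cs 0)) :
    IsCycleChain src tgt (Fin.cons C Cs : Fin (k + 2) → List E) := by
  have hdisj' : ∀ j, CyclesDisjoint src C (Cs j) := by
    rintro j v ⟨hvC, hvj⟩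
    obtain ⟨a, ha, b, hb, hab⟩ := h.cycleReachesCycle_zero j
    exact not_cycleReachesCycle_of_cyclesDisjoint hG hC (h.1 0) hdisj hreach
      ⟨a, ha, v, hvC, hab.trans ((h.1 j).reaches hb hvj)⟩
  refine ⟨Fin.cases hC h.1, fun i j hij => ?_, fun i => ?_⟩
  · cases i using Fin.cases <;> cases j using Fin.cases
    · exact absurd rfl hij
    · simpa using hdisj' _
    · simpa using (hdisj' _).symm
    · simpa using h.2.1 _ _ (fun h => hij (congrArg Fin.succ h))
  · cases i using Fin.cases
    · simpa using hreach
    · simpa [← Fin.succ_castSucc] using h.2.2 _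

variable (src tgt) in
def chainLevel (k : ℕ) : Set {p : ℕ → E // IsInfPath src tgt p} :=
  {p | ∃ Cs : Fin (k + 1) → List E, IsCycleChain src tgt Cs ∧ ∀ᶠ n in atTop, p.1 n ∈ Cs 0}

variable [TopologicalSpace E] [DiscreteTopology E]

lemma hasBasis_nhds_cylinder (x : ℕ → E) :
    (𝓝 x).HasBasis (fun _ : ℕ => True) (PiNat.cylinder x) := by
  refine ⟨fun s => ⟨fun hs => ?_, fun ⟨n, _, hn⟩ =>
    mem_of_superset ((PiNat.isOpen_cylinder _ x n).mem_nhds (PiNat.self_mem_cylinder x n)) hn⟩⟩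
  obtain ⟨_, ⟨y, n, rfl⟩, hx, hs'⟩ := (PiNat.isTopologicalBasis_cylinders _).mem_nhds_iff.mp hs
  exact ⟨n, trivial, PiNat.mem_cylinder_iff_eq.mp hx ▸ hs'⟩

lemma mem_derivedSet_iff_cylinder {P : (ℕ → E) → Prop} {S : Set {p // P p}} {x : {p // P p}} :
    x ∈ derivedSet S ↔ ∀ n, ∃ y ∈ S, y ≠ x ∧ y.1 ∈ PiNat.cylinder x.1 n := by
  rw [mem_derivedSet, accPt_iff_frequently, (Topology.IsEmbedding.subtypeVal.isInducing.basis_nhds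
    (hasBasis_nhds_cylinder x.1)).frequently_iff]
  simp only [true_implies, Function.comp_apply, Set.mem_preimage]
  exact forall_congr' fun n => exists_congr fun y => by tauto

lemma derivedSet_chainLevel_subset [Finite V] (hG : NoIntersectingCycles src tgt) (k : ℕ) :
    derivedSet (chainLevel src tgt k) ⊆ chainLevel src tgt (k + 1) := by
  intro p hp
  obtain ⟨C, hC, hpC⟩ := p.2.exists_isSimpleCycle_eventually_mem hG
  obtain ⟨N, hN⟩ := eventually_atTop.mp hpC
  obtain ⟨q, ⟨Cs, hCs, hqC⟩, hqp, hcyl⟩ := mem_derivedSet_iff_cylinder.mp hp (N + 1)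
  have hne : q.1 ≠ p.1 := fun h => hqp (Subtype.ext h)
  set t := PiNat.firstDiff q.1 p.1
  have ht : N + 1 ≤ t := (PiNat.mem_cylinder_iff_le_firstDiff hne (N + 1)).mp hcyl
  have hsrc : src (q.1 t) = src (p.1 t) := by
    obtain ⟨s, hs⟩ : ∃ s, t = s + 1 := ⟨t - 1, by omega⟩
    rw [hs, ← q.2 s, ← p.2 s,
      PiNat.apply_eq_of_lt_firstDiff (x := q.1) (y := p.1) (n := s) (by omega)]
  have hptC : p.1 t ∈ C := hN t (by omega)
  obtain ⟨hreach, hdisj⟩ := hC.cycleReachesCycle_and_cyclesDisjoint_of_not_mem hG (hCs.1 0) q.2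
    hqC (hsrc ▸ List.mem_map_of_mem hptC)
    (fun hqt => PiNat.apply_firstDiff_ne hne (hC.eq_of_src_eq hqt hptC hsrc))
  exact ⟨Fin.cons C Cs, hCs.cons hG hC hreach hdisj, by simpa using hpC⟩

lemma chainLevel_succ_subset_derivedSet (k : ℕ) :
    chainLevel src tgt (k + 1) ⊆ derivedSet (chainLevel src tgt k) := by
  rintro p ⟨Cs, hCs, hpC⟩
  rw [mem_derivedSet_iff_cylinder]
  intro n
  obtain ⟨N, hN⟩ := eventually_atTop.mp hpC
  obtain ⟨a, ha, w, hw, haw⟩ : CycleReachesCycle src tgt (Cs 0) (Cs 1) := by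
    simpa using hCs.2.2 0
  obtain ⟨r, hr, hr0, hrC⟩ := (hCs.1 1).exists_isInfPath hw
  have hreach : Reaches src tgt (src (p.1 (max n N))) (src (r 0)) :=
    hr0 ▸ ((hCs.1 0).reaches (List.mem_map_of_mem (hN _ (le_max_right n N))) ha).trans haw
  obtain ⟨q, hq, hqp, K, hqr⟩ := p.2.exists_agree_of_reaches hr hreach
  have hqC : ∀ᶠ m in atTop, q m ∈ Cs 1 := eventually_atTop.mpr ⟨K, fun m hm => by
    obtain ⟨k, rfl⟩ := Nat.exists_eq_add_of_le hm
    exact hqr k ▸ hrC k⟩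
  refine ⟨⟨q, hq⟩, ⟨Fin.tail Cs, hCs.tail, by simpa [Fin.tail] using hqC⟩, fun hqp' => ?_,
    PiNat.mem_cylinder_iff.mpr fun m hm => hqp m (by omega)⟩
  obtain ⟨m, hq1, hp0⟩ := (hqC.and hpC).exists
  rw [← hqp'] at hp0
  exact hCs.2.1 0 1 (by simp) _ ⟨List.mem_map_of_mem hp0, List.mem_map_of_mem hq1⟩

theorem iterate_derivedSet_univ_eq_chainLevel [Finite V] (hG : NoIntersectingCycles src tgt)
    (k : ℕ) : derivedSet^[k] (Set.univ : Set {p : ℕ → E // IsInfPath src tgt p}) =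
      chainLevel src tgt k := by
  induction k with
  | zero =>
    refine (Set.eq_univ_of_forall fun p => ?_).symm
    obtain ⟨C, hC, hpC⟩ := p.2.exists_isSimpleCycle_eventually_mem hG
    exact ⟨fun _ => C, hC.isCycleChain, hpC⟩
  | succ k ih =>
    rw [Function.iterate_succ_apply', ih]
    exact (derivedSet_chainLevel_subset hG k).antisymm (chainLevel_succ_subset_derivedSet k)

end

lemma sInf_iterate_derivedSet_eq_empty {X : Type*} [TopologicalSpace X] {D : ℕ}
    (hD : derivedSet^[D] (Set.univ : Set X) ≠ ∅)
    (hD1 : derivedSet^[D + 1] (Set.univ : Set X) = ∅) :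
    sInf {n | derivedSet^[n] (Set.univ : Set X) = ∅} = D + 1 := by
  have hanti : Antitone fun n => derivedSet^[n] (Set.univ : Set X) := by
    refine antitone_nat_of_succ_le fun n => ?_
    induction n with
    | zero => exact Set.subset_univ _
    | succ n ih =>
      simp only [Function.iterate_succ_apply'] at ih ⊢
      exact derivedSet_mono _ _ ih
  refine le_antisymm (Nat.sInf_le hD1) (le_csInf ⟨_, hD1⟩ fun m hm => ?_)
  by_contra hlt
  exact hD (Set.subset_eq_empty (hanti (by omega : m ≤ D)) hm)

theorem cantorBendixson_rank_infPaths_general [Fintype V]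
    [TopologicalSpace E] [DiscreteTopology E] (src tgt : E → V)
    (hG : NoIntersectingCycles src tgt)
    (D : ℕ)
    (hD : IsGreatest {k : ℕ | ∃ C : Fin (k + 1) → List E,
      (∀ i, IsSimpleCycle src tgt (C i)) ∧
      (∀ i j, i ≠ j → CyclesDisjoint src (C i) (C j)) ∧
      (∀ i : Fin k, CycleReachesCycle src tgt (C i.castSucc) (C i.succ))} D) :
    derivedSet^[D] (Set.univ : Set {p : ℕ → E // IsInfPath src tgt p}) ≠ ∅ ∧
    derivedSet^[D + 1] (Set.univ : Set {p : ℕ → E // IsInfPath src tgt p}) = ∅ ∧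
    sInf {n : ℕ |
      derivedSet^[n] (Set.univ : Set {p : ℕ → E // IsInfPath src tgt p}) = ∅} = D + 1 := by
  obtain ⟨Cs, hCs⟩ := hD.1
  obtain ⟨w, hw⟩ := (hCs.1 0).exists_onCycle
  obtain ⟨r, hr, -, hrC⟩ := (hCs.1 0).exists_isInfPath hw
  have hne : derivedSet^[D] (Set.univ : Set {p : ℕ → E // IsInfPath src tgt p}) ≠ ∅ := by
    rw [iterate_derivedSet_univ_eq_chainLevel hG]
    exact Set.nonempty_iff_ne_empty.mp ⟨⟨r, hr⟩, Cs, hCs, Eventually.of_forall hrC⟩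
  have hempty : derivedSet^[D + 1] (Set.univ : Set {p : ℕ → E // IsInfPath src tgt p}) = ∅ := by
    rw [iterate_derivedSet_univ_eq_chainLevel hG]
    refine Set.eq_empty_iff_forall_notMem.mpr fun p ⟨Cs', hCs', _⟩ => ?_
    have := hD.2 ⟨Cs', hCs'⟩
    omega
  exact ⟨hne, hempty, sInf_iterate_derivedSet_eq_empty hne hempty⟩

/-- Let `G` be a finite directed multigraph with no intersecting
cycles containing at least one simple cycle, and let `D` be the largest `k` for which
there is a chain `C₀ ≥ C₁ ≥ ⋯ ≥ C_k` of pairwise vertex-disjoint simple cycles. Then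
for the space `P` of infinite paths (as a subspace of `E ^ ℕ` with `E` discrete) one has
`P⁽ᴰ⁾ ≠ ∅` and `P⁽ᴰ⁺¹⁾ = ∅`; in particular the Cantor–Bendixson rank of `P` is
`D + 1`. -/
theorem cantorBendixson_rank_infPaths [Fintype V] [Fintype E]
    [TopologicalSpace E] [DiscreteTopology E] (src tgt : E → V)
    (hG : NoIntersectingCycles src tgt)
    (hcyc : ∃ l : List E, IsSimpleCycle src tgt l)
    (D : ℕ)
    (hD : IsGreatest {k : ℕ | ∃ C : Fin (k + 1) → List E,
      (∀ i, IsSimpleCycle src tgt (C i)) ∧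
      (∀ i j, i ≠ j → CyclesDisjoint src (C i) (C j)) ∧
      (∀ i : Fin k, CycleReachesCycle src tgt (C i.castSucc) (C i.succ))} D) :
    derivedSet^[D] (Set.univ : Set {p : ℕ → E // IsInfPath src tgt p}) ≠ ∅ ∧
    derivedSet^[D + 1] (Set.univ : Set {p : ℕ → E // IsInfPath src tgt p}) = ∅ ∧
    sInf {n : ℕ |
      derivedSet^[n] (Set.univ : Set {p : ℕ → E // IsInfPath src tgt p}) = ∅} = D + 1 :=
  cantorBendixson_rank_infPaths_general src tgt hG D hD
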